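/- arXiv:2604.14036 — 8 statements merged into one kernel-verified Lean document; each statement's English description precedes it below -/
import Mathlib

section
/- Let W = w₁w₂… be an infinite word over a finite alphabet S that is not ultimately periodic, and let e ≥ 0 and M ≥ 1 be integers. Then there exist a word U of length e over S, two distinct letters s, s' ∈ S, and a congruence class m̄ modulo M such that both words sU and s'U occur in W at infinitely many positions congruent to m̄ modulo M. -/
/-! If the theorem failed, then from some point on the letter `w n` would be determined by
`n mod M` and the `e` letters following it. The state `(n mod M, w n, …, w (n + e))`, which
ranges over a finite set, would then determine its predecessor. A finite-state sequence with
this property is periodic from that point on: a state that recurs lies on a cycle of the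
predecessor map, and every later state is obtained from it by iterating that map. -/

open Filter

theorem Finite.eventually_cofinite_infinite_fiber {α β : Type*} [Finite β] (f : α → β) :
    ∀ᶠ a in cofinite, (f ⁻¹' {f a}).Infinite := by
  refine eventually_cofinite.2 <| ((Set.toFinite {b | (f ⁻¹' {b}).Finite}).biUnion
    fun _ hb => hb).subset fun a ha => Set.mem_biUnion ?_ rfl
  simpa using ha

theorem exists_period_of_map_succ_eq {Q : Type*} [Finite Q] (x : ℕ → Q) (F : Q → Q) (N : ℕ)
    (hF : ∀ n ≥ N, F (x (n + 1)) = x n) : ∃ p ≥ 1, ∀ n ≥ N, x (n + p) = x n := by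
  have iterate : ∀ n ≥ N, ∀ t ≥ n, F^[t - n] (x t) = x n := by
    intro n hn t ht
    induction t, ht using Nat.le_induction with
    | base => simp
    | succ t ht ih =>
      rw [Nat.succ_sub ht, Function.iterate_succ_apply, hF t (hn.trans ht), ih]
  obtain ⟨q, hq⟩ := Finite.exists_infinite_fiber x
  rw [Set.infinite_coe_iff] at hq
  obtain ⟨t₁, rfl, hNt₁⟩ := hq.exists_gt N
  obtain ⟨t₂, ht₂, ht₁₂⟩ := hq.exists_gt t₁
  set p := t₂ - t₁
  have cycle : F^[p] (x t₁) = x t₁ := by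
    have := iterate t₁ hNt₁.le t₂ ht₁₂.le
    rwa [show x t₂ = x t₁ from ht₂] at this
  refine ⟨p, by omega, fun n hn => ?_⟩
  obtain ⟨t, ht, hnt⟩ := hq.exists_gt (n + p)
  calc x (n + p) = F^[t - (n + p)] (F^[p] (x t₁)) := by
        rw [cycle, ← ht, iterate _ (by omega) _ hnt.le]
    _ = F^[t - n] (x t) := by rw [← Function.iterate_add_apply, ht]; congr 2; omega
    _ = x n := iterate n hn t (by omega)

theorem exists_period_of_succ_determines_pred {Q : Type*} [Finite Q] (x : ℕ → Q) (N : ℕ)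
    (h : ∀ a ≥ N, ∀ b ≥ N, x (a + 1) = x (b + 1) → x a = x b) :
    ∃ p ≥ 1, ∀ n ≥ N, x (n + p) = x n := by
  let succ (n : {n // N ≤ n}) : Q := x (n + 1)
  have hfactors : (fun n : {n // N ≤ n} => x n).FactorsThrough succ :=
    fun a b hab => h a a.2 b b.2 hab
  exact exists_period_of_map_succ_eq x (Function.extend succ (fun n => x n) id) N
    fun n hn => hfactors.extend_apply id ⟨n, hn⟩

def occurrences {S : Type*} {e : ℕ} (w : ℕ → S) (M m : ℕ) (s : S) (U : Fin e → S) :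
    Set ℕ :=
  {n | n % M = m % M ∧ w n = s ∧ ∀ i : Fin e, w (n + 1 + i) = U i}

theorem exists_letter_determined_by_window {S : Type*} [Finite S] (w : ℕ → S) (e M : ℕ)
    [NeZero M]
    (h : ∀ (U : Fin e → S) (s s' : S) (m : ℕ), s ≠ s' →
      (occurrences w M m s U).Infinite → (occurrences w M m s' U).Finite) :
    ∃ N, ∀ a ≥ N, ∀ b ≥ N, a ≡ b [MOD M] →
      (∀ i : Fin e, w (a + 1 + i) = w (b + 1 + i)) → w a = w b := by
  let f (n : ℕ) : ZMod M × S × (Fin e → S) := (n, w n, fun i => w (n + 1 + i))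
  have mem_occurrences {a k : ℕ} (hk : f k = f a) :
      k ∈ occurrences w M a (w a) fun i : Fin e => w (a + 1 + i) := by
    simp only [f, Prod.ext_iff, ZMod.natCast_eq_natCast_iff', funext_iff] at hk
    exact hk
  obtain ⟨N, hN⟩ := eventually_atTop.1 <|
    Nat.cofinite_eq_atTop ▸ Finite.eventually_cofinite_infinite_fiber f
  refine ⟨N, fun a ha b hb hab hwin => by_contra fun hne => ?_⟩
  refine (h _ _ _ a hne ((hN a ha).mono fun k hk => mem_occurrences hk)).not_infinite
    ((hN b hb).mono fun k hk => ?_)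
  obtain ⟨hmod, hk, hkwin⟩ := mem_occurrences hk
  exact ⟨hmod.trans hab.symm, hk, fun i => (hkwin i).trans (hwin i).symm⟩

/-- If `w` is not ultimately periodic over a finite alphabet, then for all `e, M` there
are a word `U` of length `e`, distinct letters `s ≠ s'` and a congruence class `m` mod `M`
such that `sU` and `s'U` both occur at infinitely many positions in that class. -/
theorem stmt2 {S : Type*} [Fintype S] (w : ℕ → S)
    (hW : ¬ ∃ N p : ℕ, 1 ≤ p ∧ ∀ k ≥ N, w (k + p) = w k)
    (e M : ℕ) (hM : 1 ≤ M) :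
    ∃ (U : Fin e → S) (s s' : S) (m : ℕ), s ≠ s' ∧
      {n : ℕ | n % M = m % M ∧ w n = s ∧ ∀ i : Fin e, w (n + 1 + i) = U i}.Infinite ∧
      {n : ℕ | n % M = m % M ∧ w n = s' ∧ ∀ i : Fin e, w (n + 1 + i) = U i}.Infinite := by
  have : NeZero M := ⟨by omega⟩
  by_contra h
  push Not at h
  obtain ⟨N, hN⟩ := exists_letter_determined_by_window w e M h
  let x (n : ℕ) : ZMod M × (Fin (e + 1) → S) := (n, fun i => w (n + i))
  have succ_determines_pred : ∀ a ≥ N, ∀ b ≥ N, x (a + 1) = x (b + 1) → x a = x b := by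
    intro a ha b hb hab
    simp only [x, Prod.ext_iff, funext_iff, Nat.cast_succ, add_left_inj] at hab ⊢
    refine ⟨hab.1, Fin.cases ?_ fun j => ?_⟩
    · simpa using hN a ha b hb ((ZMod.natCast_eq_natCast_iff _ _ _).1 hab.1)
        fun i => hab.2 i.castSucc
    · rw [Fin.val_succ, add_comm (j : ℕ), ← add_assoc, ← add_assoc]
      exact hab.2 j.castSucc
  obtain ⟨p, hp, hper⟩ := exists_period_of_succ_determines_pred x N succ_determines_pred
  exact hW ⟨N, p, hp, fun k hk => by simpa [x] using congr_arg (·.2 0) (hper k hk)⟩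
end

section
/- Let W = w₁w₂… be an infinite word over a finite alphabet S that is not ultimately periodic, and let e ≥ 0 and M ≥ 1 be integers. Then there exist a word V of length e over S, two distinct letters t, t' ∈ S, and a congruence class n̄ modulo M such that both words Vt and Vt' occur in W at infinitely many positions congruent to n̄ modulo M. -/
/-!
Record at each position `n` the state `(n mod M, w_n … w_{n+e-1})`, which ranges over a
finite set. If the conclusion failed, then for every state at most one letter would follow
it infinitely often, so from some point on the next letter `w_{n+e}` would be a function of
the state. The state at `n + 1` is determined by the state at `n` and that letter, so the
state sequence would eventually be deterministic on a finite set, hence ultimately periodic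
by pigeonhole, and then so would be `w`.
-/

open Filter

def UltimatelyPeriodic {α : Type*} (f : ℕ → α) : Prop :=
  ∃ N p : ℕ, 1 ≤ p ∧ ∀ k ≥ N, f (k + p) = f k

section Dynamics

variable {α β : Type*}

theorem ultimatelyPeriodic_of_eq_imp_succ_eq [Finite α] {σ : ℕ → α} {N : ℕ}
    (hσ : ∀ m n, N ≤ m → N ≤ n → σ m = σ n → σ (m + 1) = σ (n + 1)) :
    UltimatelyPeriodic σ := by
  obtain ⟨a, b, hab, heq⟩ := Finite.exists_ne_map_eq_of_infinite fun k => σ (N + k)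
  wlog hlt : a < b generalizing a b
  · exact this b a hab.symm heq.symm (by omega)
  have shift : ∀ j, σ (N + a + j) = σ (N + b + j) := by
    intro j
    induction j with
    | zero => exact heq
    | succ j ih => exact hσ (N + a + j) (N + b + j) (by omega) (by omega) ih
  refine ⟨N + a, b - a, by omega, fun k hk => ?_⟩
  obtain ⟨j, rfl⟩ := Nat.exists_eq_add_of_le hk
  rw [show N + a + j + (b - a) = N + b + j by omega]
  exact (shift j).symm

theorem UltimatelyPeriodic.of_eventually_add_eq_comp {σ : ℕ → α}
    (hσ : UltimatelyPeriodic σ) {x : ℕ → β} {g : α → β} {e : ℕ}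
    (hx : ∀ᶠ n in atTop, x (n + e) = g (σ n)) : UltimatelyPeriodic x := by
  obtain ⟨N, p, hp, hper⟩ := hσ
  obtain ⟨N', hN'⟩ := eventually_atTop.1 hx
  refine ⟨max N N' + e, p, hp, fun k hk => ?_⟩
  obtain ⟨n, rfl⟩ : ∃ n, k = n + e := ⟨k - e, by omega⟩
  calc x (n + e + p) = g (σ (n + p)) := by rw [add_right_comm]; exact hN' _ (by omega)
    _ = g (σ n) := by rw [hper n (by omega)]
    _ = x (n + e) := (hN' n (by omega)).symm

theorem exists_eventually_eq_comp_of_unique_frequent [Finite α] [Finite β]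
    (σ : ℕ → α) (x : ℕ → β)
    (h : ∀ a b b', b ≠ b' → {n | σ n = a ∧ x n = b}.Infinite →
      {n | σ n = a ∧ x n = b'}.Finite) :
    ∃ g : α → β, ∀ᶠ n in atTop, x n = g (σ n) := by
  have hfiber : ∀ a, ∃ b, ∀ᶠ n in atTop, σ n = a → x n = b := by
    intro a
    obtain ⟨b, hrare⟩ :
        ∃ b : β, ∀ b' : {b' // b' ≠ b}, {n | σ n = a ∧ x n = (b' : β)}.Finite := by
      by_cases hfreq : ∃ b, {n | σ n = a ∧ x n = b}.Infinite
      · obtain ⟨b, hb⟩ := hfreq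
        exact ⟨b, fun b' => h a b b' b'.2.symm hb⟩
      · push Not at hfreq
        exact ⟨x 0, fun b' => hfreq b'⟩
    have hfin : {n | σ n = a ∧ x n ≠ b}.Finite :=
      (Set.finite_iUnion hrare).subset fun n ⟨ha, hne⟩ =>
        Set.mem_iUnion.2 ⟨⟨x n, hne⟩, ha, rfl⟩
    refine ⟨b, ?_⟩
    rw [← Nat.cofinite_eq_atTop]
    filter_upwards [hfin.eventually_cofinite_notMem] with n hn ha
    exact not_not.1 fun hne => hn ⟨ha, hne⟩
  choose g hg using hfiber
  exact ⟨g, (eventually_all.2 hg).mono fun n hn => hn _ rfl⟩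

end Dynamics

section Words

variable {S : Type*}

def residueWindow (M e : ℕ) [NeZero M] (w : ℕ → S) (n : ℕ) : Fin M × (Fin e → S) :=
  (Fin.ofNat M n, fun i => w (n + i))

theorem residueWindow_succ_eq {M e : ℕ} [NeZero M] {w : ℕ → S} {m n : ℕ}
    (h : residueWindow M e w m = residueWindow M e w n) (hnext : w (m + e) = w (n + e)) :
    residueWindow M e w (m + 1) = residueWindow M e w (n + 1) := by
  have hlong : ∀ i : Fin (e + 1), w (m + i) = w (n + i) :=
    Fin.forall_fin_succ'.2 ⟨fun i => congrFun (congrArg Prod.snd h) i, by simpa using hnext⟩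
  refine Prod.ext ?_ (funext fun i => ?_)
  · have hres : m ≡ n [MOD M] := by
      simpa [Nat.ModEq, residueWindow, Fin.ext_iff] using congrArg Prod.fst h
    exact Fin.ext (hres.add_right 1)
  · simpa [residueWindow, add_assoc, add_comm 1] using hlong i.succ

end Words

/-- If `w` is not ultimately periodic over a finite alphabet, then for all `e, M` there
are a word `V` of length `e`, distinct letters `t ≠ t'` and a congruence class `n₀` mod `M`
such that `Vt` and `Vt'` both occur at infinitely many positions in that class. -/
theorem stmt3 {S : Type*} [Fintype S] (w : ℕ → S)
    (hW : ¬ ∃ N p : ℕ, 1 ≤ p ∧ ∀ k ≥ N, w (k + p) = w k)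
    (e M : ℕ) (hM : 1 ≤ M) :
    ∃ (V : Fin e → S) (t t' : S) (m : ℕ), t ≠ t' ∧
      {n : ℕ | n % M = m % M ∧ (∀ i : Fin e, w (n + i) = V i) ∧ w (n + e) = t}.Infinite ∧
      {n : ℕ | n % M = m % M ∧ (∀ i : Fin e, w (n + i) = V i) ∧ w (n + e) = t'}.Infinite := by
  have : NeZero M := ⟨by omega⟩
  by_contra! hcon
  have hfiber : ∀ (r : Fin M) (V : Fin e → S) (t : S),
      {n | residueWindow M e w n = (r, V) ∧ w (n + e) = t} =
        {n | n % M = r.val % M ∧ (∀ i : Fin e, w (n + i) = V i) ∧ w (n + e) = t} := by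
    intro r V t
    ext n
    simp [residueWindow, Fin.ext_iff, funext_iff, Nat.mod_eq_of_lt r.isLt, and_assoc]
  obtain ⟨g, hg⟩ := exists_eventually_eq_comp_of_unique_frequent (residueWindow M e w)
    (fun n => w (n + e)) fun ⟨r, V⟩ t t' htt' ht => by
      rw [hfiber] at ht ⊢
      exact hcon V t t' r htt' ht
  obtain ⟨N, hN⟩ := eventually_atTop.1 hg
  have hdet : ∀ m n, N ≤ m → N ≤ n → residueWindow M e w m = residueWindow M e w n →
      residueWindow M e w (m + 1) = residueWindow M e w (n + 1) := fun m n hm hn h =>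
    residueWindow_succ_eq h (by rw [hN m hm, hN n hn, h])
  exact hW ((ultimatelyPeriodic_of_eq_imp_succ_eq hdet).of_eventually_add_eq_comp hg)
end

section
/- Let α ∈ ℂ be an algebraic number all of whose Galois conjugates have modulus ≤ 1. If some Galois conjugate of α has modulus exactly 1, then all Galois conjugates of α have modulus exactly 1. -/
/-! If a conjugate `β` lies on the unit circle, then `β⁻¹ = conj β` is a conjugate too, so the
minimal polynomial divides its reverse and the set of conjugates is closed under inversion.
Every conjugate `γ` then satisfies both `‖γ‖ ≤ 1` and `‖γ⁻¹‖ ≤ 1`. -/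

open Polynomial ComplexConjugate

lemma Polynomial.aeval_conj_of_rat (p : ℚ[X]) (z : ℂ) : aeval (conj z) p = conj (aeval z p) :=
  aeval_algHom_apply (Complex.conjAe.restrictScalars ℚ) z p

lemma Polynomial.aeval_inv_reverse_eq_zero_iff {R L : Type*} [CommSemiring R] [Field L]
    [Algebra R L] {x : L} (hx : x ≠ 0) (p : R[X]) :
    aeval x⁻¹ p.reverse = 0 ↔ aeval x p = 0 := by
  have : Invertible x := invertibleOfNonzero hx
  simpa only [aeval_def, invOf_eq_inv] using eval₂_reverse_eq_zero_iff (algebraMap R L) x p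

namespace minpoly

variable {K L : Type*} [Field K] [Field L] [Algebra K L] {x γ : L}

lemma ne_zero_of_aeval_eq_zero (hx : IsIntegral K x) (hx0 : x ≠ 0)
    (hγ : Polynomial.aeval γ (minpoly K x) = 0) : γ ≠ 0 := by
  rintro rfl
  exact coeff_zero_ne_zero hx hx0 (by simpa [← coeff_zero_eq_aeval_zero'] using hγ)

lemma aeval_inv_eq_zero (hx : IsIntegral K x) (hx0 : x ≠ 0)
    (hinv : Polynomial.aeval x⁻¹ (minpoly K x) = 0) (hγ : Polynomial.aeval γ (minpoly K x) = 0) :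
    Polynomial.aeval γ⁻¹ (minpoly K x) = 0 := by
  have hdvd : minpoly K x ∣ (minpoly K x).reverse :=
    dvd K x (by simpa using (aeval_inv_reverse_eq_zero_iff (inv_ne_zero hx0) _).2 hinv)
  have hγ0 := ne_zero_of_aeval_eq_zero hx hx0 hγ
  rw [← aeval_inv_reverse_eq_zero_iff (inv_ne_zero hγ0), inv_inv]
  exact aeval_eq_zero_of_dvd_aeval_eq_zero hdvd hγ

end minpoly

lemma norm_eq_one_of_norm_le_one_of_norm_inv_le_one {𝕜 : Type*} [NormedDivisionRing 𝕜] {x : 𝕜}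
    (hx0 : x ≠ 0) (hx : ‖x‖ ≤ 1) (hinv : ‖x⁻¹‖ ≤ 1) : ‖x‖ = 1 := by
  rw [norm_inv, inv_le_one₀ (norm_pos_iff.2 hx0)] at hinv
  exact le_antisymm hx hinv

/-- If all Galois conjugates of an algebraic number have modulus ≤ 1 and one of them has
modulus 1, then all of them have modulus 1. -/
theorem stmt4 (α : ℂ) (hα : IsAlgebraic ℚ α)
    (hle : ∀ β : ℂ, Polynomial.aeval β (minpoly ℚ α) = 0 → ‖β‖ ≤ 1)
    (hex : ∃ β : ℂ, Polynomial.aeval β (minpoly ℚ α) = 0 ∧ ‖β‖ = 1) :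
    ∀ β : ℂ, Polynomial.aeval β (minpoly ℚ α) = 0 → ‖β‖ = 1 := by
  obtain ⟨β, hβ, hβ1⟩ := hex
  have hβ0 : β ≠ 0 := norm_ne_zero_iff.1 (hβ1 ▸ one_ne_zero)
  have hβint : IsIntegral ℚ β := ⟨_, minpoly.monic hα.isIntegral, hβ⟩
  have hmin : minpoly ℚ α = minpoly ℚ β := minpoly.eq_of_irreducible_of_monic
    (minpoly.irreducible hα.isIntegral) hβ (minpoly.monic hα.isIntegral)
  have hβinv : aeval β⁻¹ (minpoly ℚ β) = 0 := by
    rw [Complex.inv_eq_conj hβ1, aeval_conj_of_rat, minpoly.aeval, map_zero]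
  intro γ hγ
  rw [hmin] at hle hγ
  exact norm_eq_one_of_norm_le_one_of_norm_inv_le_one
    (minpoly.ne_zero_of_aeval_eq_zero hβint hβ0 hγ) (hle γ hγ)
    (hle _ (minpoly.aeval_inv_eq_zero hβint hβ0 hβinv hγ))
end

section
/- Let R(x) = Σ_{i=0}^{r} u_i x^i ∈ ℤ[x] be a nonzero polynomial and let (x_k)_{k≥1} be a sequence of real numbers with Σ_{i=0}^{r} u_i x_{k+i} = 0 for all k ≥ 1. Suppose x_k = y_k + z_k with z_k ∈ ℤ for all k, (y_k) bounded, and (z_k) not a linear recurrent sequence over ℤ. Then limsup_{k→∞} |y_k| ≥ 1/L(R), where L(R) = Σ_{i=0}^{r} |u_i| is the length of R. -/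
/-!
If `limsup |y_k| < 1/L(R)`, then eventually `|y_k| < 1/L(R)`, so the integer
`Σ u_i z_{k+i} = -Σ u_i y_{k+i}` has absolute value `< 1` and vanishes. Hence `z` satisfies the
recurrence of `R` from some index `N` on, and `x^N R` (trimmed to its true degree) gives a linear
recurrence for all of `z`.
-/

/-- A sequence of reals satisfying an integer linear recurrence. -/
def IsLinRec (z : ℕ → ℝ) : Prop :=
  ∃ (d : ℕ) (a : ℕ → ℤ), a d ≠ 0 ∧ ∀ k : ℕ, 1 ≤ k →
    ∑ i ∈ Finset.range (d + 1), (a i : ℝ) * z (k + i) = 0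

open Finset

theorem IsLinRec.of_eventually_of_leading_ne_zero {z : ℕ → ℝ} {d N : ℕ} {a : ℕ → ℤ}
    (had : a d ≠ 0) (h : ∀ k, N ≤ k → ∑ i ∈ range (d + 1), (a i : ℝ) * z (k + i) = 0) :
    IsLinRec z := by
  refine ⟨d + N, fun i => if N ≤ i then a (i - N) else 0, by simpa using had, fun k hk => ?_⟩
  rw [show d + N + 1 = N + (d + 1) by ring, sum_range_add]
  have hpad : ∀ i ∈ range N, ((if N ≤ i then a (i - N) else 0 : ℤ) : ℝ) * z (k + i) = 0 :=
    fun i hi => by simp [not_le.mpr (mem_range.mp hi)]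
  rw [sum_eq_zero hpad, zero_add, ← h (k + N) (by omega)]
  simp [add_assoc]

theorem IsLinRec.of_eventually {z : ℕ → ℝ} {r N : ℕ} {u : ℕ → ℤ}
    (hu : ∃ i, i ≤ r ∧ u i ≠ 0)
    (h : ∀ k, N ≤ k → ∑ i ∈ range (r + 1), (u i : ℝ) * z (k + i) = 0) :
    IsLinRec z := by
  classical
  obtain ⟨i, hir, hi⟩ := hu
  set d := Nat.findGreatest (fun i => u i ≠ 0) r
  have hd : u d ≠ 0 := Nat.findGreatest_spec (P := fun i => u i ≠ 0) hir hi
  refine of_eventually_of_leading_ne_zero (N := N) hd fun k hk => ?_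
  rw [← h k hk]
  refine sum_subset (range_subset_range.mpr (by simpa using Nat.findGreatest_le r))
    fun j hj hjd => ?_
  simp only [mem_range] at hj hjd
  have huj : u j = 0 := not_not.mp <|
    Nat.findGreatest_is_greatest (P := fun i => u i ≠ 0) (n := r) (by omega) (by omega)
  simp [huj]

theorem abs_sum_mul_lt {ι : Type*} {s : Finset ι} {c w : ι → ℝ} {ε : ℝ}
    (hw : ∀ i ∈ s, |w i| < ε) (hc : ∃ i ∈ s, c i ≠ 0) :
    |∑ i ∈ s, c i * w i| < (∑ i ∈ s, |c i|) * ε := by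
  rw [sum_mul]
  refine (abs_sum_le_sum_abs _ _).trans_lt (sum_lt_sum (fun i hi => ?_) ?_)
  · rw [abs_mul]; exact mul_le_mul_of_nonneg_left (hw i hi).le (abs_nonneg _)
  · obtain ⟨i, hi, hci⟩ := hc
    exact ⟨i, hi, by rw [abs_mul]; exact mul_lt_mul_of_pos_left (hw i hi) (abs_pos.mpr hci)⟩

/-- If `x_k = y_k + z_k` satisfies the recurrence of `R`, with `y` bounded, `z` integral
and not linear recurrent, then `limsup |y_k| ≥ 1/L(R)`. -/
theorem stmt8 (r : ℕ) (u : ℕ → ℤ) (hu : ∃ i, i ≤ r ∧ u i ≠ 0)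
    (x y : ℕ → ℝ) (z : ℕ → ℤ)
    (hrec : ∀ k : ℕ, 1 ≤ k → ∑ i ∈ Finset.range (r + 1), (u i : ℝ) * x (k + i) = 0)
    (hxyz : ∀ k : ℕ, 1 ≤ k → x k = y k + z k)
    (hy : ∃ C : ℝ, ∀ k, |y k| ≤ C)
    (hz : ¬ IsLinRec (fun k => (z k : ℝ))) :
    1 / (∑ i ∈ Finset.range (r + 1), |(u i : ℝ)|) ≤
      Filter.limsup (fun k => |y k|) Filter.atTop := by
  by_contra! hlt
  set L := ∑ i ∈ range (r + 1), |(u i : ℝ)|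
  obtain ⟨C, hC⟩ := hy
  obtain ⟨K, hK⟩ := Filter.eventually_atTop.mp <|
    Filter.eventually_lt_of_limsup_lt hlt (Filter.isBoundedUnder_of ⟨C, hC⟩)
  have hu' : ∃ i ∈ range (r + 1), (u i : ℝ) ≠ 0 := by
    obtain ⟨i, hir, hi⟩ := hu
    exact ⟨i, mem_range.mpr (by omega), by exact_mod_cast hi⟩
  have hL : 0 < L := by
    obtain ⟨i, hi, hui⟩ := hu'
    exact sum_pos' (fun j _ => abs_nonneg _) ⟨i, hi, abs_pos.mpr hui⟩
  refine hz (IsLinRec.of_eventually hu (N := K + 1) fun k hk => ?_)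
  have hsplit : ∑ i ∈ range (r + 1), (u i : ℝ) * z (k + i) =
      -∑ i ∈ range (r + 1), (u i : ℝ) * y (k + i) := by
    rw [eq_neg_iff_add_eq_zero, ← sum_add_distrib, ← hrec k (by omega)]
    refine sum_congr rfl fun i _ => ?_
    rw [hxyz (k + i) (by omega)]
    ring
  -- `hsplit` equates an integer with a real number of absolute value `< 1`.
  have hsmall : |∑ i ∈ range (r + 1), (u i : ℝ) * y (k + i)| < 1 := by
    calc _ < L * (1 / L) := abs_sum_mul_lt (fun i _ => hK (k + i) (by omega)) hu'
      _ = 1 := mul_one_div_cancel hL.ne'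
  have hcast : ∑ i ∈ range (r + 1), (u i : ℝ) * z (k + i) =
      ((∑ i ∈ range (r + 1), u i * z (k + i) : ℤ) : ℝ) := by
    push_cast; rfl
  rw [hcast] at hsplit ⊢
  rw [← abs_neg, ← hsplit] at hsmall
  exact_mod_cast Int.abs_lt_one_iff.mp (by exact_mod_cast hsmall)
end

section
/- Let P(x) = Σ_{s=0}^{d} a_s x^s ∈ ℤ[x] be nonzero with P(1) ≠ 0, and let F(x) = Σ_{i=0}^{f} θ_i x^i ∈ ℝ[x]. Let (x_k)_{k≥1} be reals satisfying Σ_{s=0}^{d} a_s x_{k+s} = 0 for all k ≥ 1. If the set of limit values of the sequence (x_k + F(k) mod 1)_{k≥1} in ℝ/ℤ is finite, then F(x) − F(0) ∈ ℚ[x]. -/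
/-!
Sequences in a compact Hausdorff group with finitely many limit values form a subgroup, stable
under shifts and subsequences. Since `x` satisfies the recurrence, `∑ a_s (x_{k+s} + F(k+s))`
is the value at `k` of `G = ∑ a_s F(X + s)`, so `G(k) mod 1` has finitely many limit values.

For a polynomial `p` this forces every nonconstant coefficient to be rational, by induction on the
degree `n`. The top coefficient is, up to the factor `n`, the top coefficient of `p(X + 1) - p(X)`;
in degree one, `αk + β mod 1` has a finite limit set invariant under rotation by `α`, so `α` is
torsion in `ℝ/ℤ`. If the top coefficient is `r` with denominator `q`, then `p(qX)` has an integral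
top term, which vanishes mod 1 at integers, and the induction applies to the rest.

Finally the coefficient of `X^n` in `G` is `P(1) ≠ 0` times the coefficient of `X^n` in `F` plus a
rational combination of higher coefficients of `F`, so those of `F` are rational, from the top down.
-/

open Filter Topology

section ClusterPoints

variable {X Y : Type*} [TopologicalSpace X] [TopologicalSpace Y]

theorem MapClusterPt.exists_eq_of_comp [CompactSpace X] [T2Space Y] {α : Type*} {F : Filter α}
    {u : α → X} {φ : X → Y} (hφ : Continuous φ) {y : Y} (h : MapClusterPt y F (φ ∘ u)) :
    ∃ x, MapClusterPt x F u ∧ φ x = y := by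
  obtain ⟨U, hUF, hU⟩ := mapClusterPt_iff_ultrafilter.1 h
  have hx : Tendsto u U (𝓝 (U.map u).lim) := (U.map u).le_nhds_lim
  exact ⟨_, mapClusterPt_iff_ultrafilter.2 ⟨U, hUF, hx⟩,
    tendsto_nhds_unique ((hφ.tendsto _).comp hx) hU⟩

theorem mapClusterPt_atTop_comp_add_iff (u : ℕ → X) (s : ℕ) (x : X) :
    MapClusterPt x atTop (fun k => u (k + s)) ↔ MapClusterPt x atTop u := by
  rw [← Function.comp_def, mapClusterPt_comp, map_add_atTop_eq_nat]

end ClusterPoints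

section FiniteClusterSeqs

variable (G : Type*) [AddGroup G] [TopologicalSpace G] [IsTopologicalAddGroup G] [CompactSpace G]
  [T2Space G]

def finiteClusterSeqs : AddSubgroup (ℕ → G) where
  carrier := {u | {p | MapClusterPt p atTop u}.Finite}
  zero_mem' := by
    refine (Set.finite_singleton (0 : G)).subset fun p hp => ?_
    obtain ⟨_, -, rfl⟩ := MapClusterPt.exists_eq_of_comp (X := Unit) (u := fun _ : ℕ => ())
      (continuous_const (y := (0 : G))) hp
    rfl
  add_mem' {u v} hu hv := by
    refine ((hu.prod hv).image fun q : G × G => q.1 + q.2).subset fun p hp => ?_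
    obtain ⟨q, hq, rfl⟩ := MapClusterPt.exists_eq_of_comp (u := fun k => (u k, v k))
      continuous_add hp
    exact ⟨q, ⟨hq.continuousAt_comp continuous_fst.continuousAt,
      hq.continuousAt_comp continuous_snd.continuousAt⟩, rfl⟩
  neg_mem' {u} hu := by
    refine (hu.image Neg.neg).subset fun p hp => ?_
    obtain ⟨q, hq, rfl⟩ := MapClusterPt.exists_eq_of_comp (u := u) continuous_neg hp
    exact ⟨q, hq, rfl⟩

variable {G}

theorem mem_finiteClusterSeqs_iff {u : ℕ → G} :
    u ∈ finiteClusterSeqs G ↔ {p | MapClusterPt p atTop u}.Finite := Iff.rfl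

theorem comp_add_mem_finiteClusterSeqs_iff {u : ℕ → G} (s : ℕ) :
    (fun k => u (k + s)) ∈ finiteClusterSeqs G ↔ u ∈ finiteClusterSeqs G := by
  simp only [mem_finiteClusterSeqs_iff, mapClusterPt_atTop_comp_add_iff]

theorem comp_mem_finiteClusterSeqs {u : ℕ → G} (hu : u ∈ finiteClusterSeqs G) {g : ℕ → ℕ}
    (hg : Tendsto g atTop atTop) : u ∘ g ∈ finiteClusterSeqs G :=
  hu.subset fun _ hp => hp.of_comp hg

theorem isOfFinAddOrder_of_mem_finiteClusterSeqs {u : ℕ → G} (hu : u ∈ finiteClusterSeqs G)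
    {g : G} (hstep : ∀ k, u (k + 1) = u k + g) : IsOfFinAddOrder g := by
  obtain ⟨p, -, hp⟩ := isCompact_univ.exists_mapClusterPt (f := atTop) (u := u) (by simp)
  have hadd : ∀ q, MapClusterPt q atTop u → MapClusterPt (q + g) atTop u := fun q hq => by
    rw [← mapClusterPt_atTop_comp_add_iff u 1]
    simpa only [hstep, Function.comp_def] using
      hq.continuousAt_comp (continuous_add_const g).continuousAt
  have horbit : ∀ n : ℕ, MapClusterPt (p + n • g) atTop u := by
    intro n
    induction n with
    | zero => simpa using hp
    | succ n ih => simpa [succ_nsmul, add_assoc] using hadd _ ih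
  rw [← injective_nsmul_iff_not_isOfFinAddOrder.not_left]
  intro hinj
  exact Set.infinite_of_injective_forall_mem (fun m n h => hinj (add_left_cancel h)) horbit hu

end FiniteClusterSeqs

open Polynomial

theorem AddCircle.coe_sum_intCast_mul {ι : Type*} {T : ℝ} (s : Finset ι) (a : ι → ℤ)
    (v : ι → ℝ) :
    ((∑ i ∈ s, (a i : ℝ) * v i : ℝ) : AddCircle T) = ∑ i ∈ s, a i • (v i : AddCircle T) := by
  simp only [← zsmul_eq_mul, ← AddCircle.coe_zsmul]
  exact map_sum (QuotientAddGroup.mk' _) _ _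

noncomputable def evalModOne : ℝ[X] →+ (ℕ → AddCircle (1 : ℝ)) where
  toFun p k := ((p.eval (k : ℝ) : ℝ) : AddCircle (1 : ℝ))
  map_zero' := by ext; simp
  map_add' p q := by ext; simp

@[simp]
theorem evalModOne_apply (p : ℝ[X]) (k : ℕ) :
    evalModOne p k = ((p.eval (k : ℝ) : ℝ) : AddCircle (1 : ℝ)) := rfl

noncomputable def finiteClusterPolys : AddSubgroup ℝ[X] :=
  (finiteClusterSeqs (AddCircle (1 : ℝ))).comap evalModOne

theorem mem_finiteClusterPolys_iff {p : ℝ[X]} :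
    p ∈ finiteClusterPolys ↔ (fun k : ℕ => ((p.eval (k : ℝ) : ℝ) : AddCircle (1 : ℝ))) ∈
      finiteClusterSeqs (AddCircle (1 : ℝ)) := Iff.rfl

theorem taylor_natCast_mem_finiteClusterPolys {p : ℝ[X]} (hp : p ∈ finiteClusterPolys) (s : ℕ) :
    taylor (s : ℝ) p ∈ finiteClusterPolys := by
  rw [mem_finiteClusterPolys_iff, ← comp_add_mem_finiteClusterSeqs_iff s] at hp
  simpa [mem_finiteClusterPolys_iff, taylor_eval] using hp

theorem comp_natCast_mul_X_mem_finiteClusterPolys {p : ℝ[X]} (hp : p ∈ finiteClusterPolys)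
    {q : ℕ} (hq : q ≠ 0) : p.comp (C (q : ℝ) * X) ∈ finiteClusterPolys := by
  have hg : Tendsto (fun k : ℕ => q * k) atTop atTop :=
    tendsto_atTop_mono (fun k => Nat.le_mul_of_pos_left k (Nat.pos_of_ne_zero hq)) tendsto_id
  simpa [mem_finiteClusterPolys_iff, Function.comp_def] using comp_mem_finiteClusterSeqs hp hg

theorem intCast_mul_X_pow_mem_finiteClusterPolys (m : ℤ) (n : ℕ) :
    C (m : ℝ) * X ^ n ∈ finiteClusterPolys := by
  have h : evalModOne (C (m : ℝ) * X ^ n) = 0 := by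
    ext k
    rw [evalModOne_apply, eval_mul, eval_C, eval_pow, eval_X, Pi.zero_apply,
      AddCircle.coe_eq_zero_iff]
    exact ⟨m * k ^ n, by simp⟩
  change evalModOne _ ∈ finiteClusterSeqs (AddCircle (1 : ℝ))
  rw [h]
  exact zero_mem _

theorem exists_rat_eq_of_linear_mem_finiteClusterPolys {α β : ℝ}
    (h : C α * X + C β ∈ finiteClusterPolys) : ∃ q : ℚ, α = q := by
  have hord : IsOfFinAddOrder (α : AddCircle (1 : ℝ)) := by
    refine isOfFinAddOrder_of_mem_finiteClusterSeqs h fun k => ?_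
    simp only [evalModOne_apply, eval_add, eval_mul, eval_C, eval_X, ← AddCircle.coe_add]
    push_cast
    ring_nf
  obtain ⟨q, hq⟩ := AddCircle.isOfFinAddOrder_iff_exists_rat_eq_div.1 hord
  exact ⟨q, by simpa using hq.symm⟩

section Taylor

variable {R : Type*} [CommRing R]

theorem coeff_taylor_of_natDegree_le {p : R[X]} {m : ℕ} (hp : p.natDegree ≤ m) (r : R) :
    (taylor r p).coeff m = p.coeff m := by
  rcases hp.lt_or_eq with h | rfl
  · rw [coeff_eq_zero_of_natDegree_lt h,
      coeff_eq_zero_of_natDegree_lt ((natDegree_taylor p r).trans_lt h)]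
  · exact coeff_taylor_natDegree r p

theorem natDegree_taylor_sub_self_le {p : R[X]} {n : ℕ} (hp : p.natDegree ≤ n + 1) (r : R) :
    (taylor r p - p).natDegree ≤ n := by
  refine natDegree_le_iff_coeff_eq_zero.2 fun m hm => ?_
  rw [coeff_sub, coeff_taylor_of_natDegree_le (by omega), sub_self]

theorem coeff_taylor_sub_self_of_natDegree_le {p : R[X]} {n : ℕ} (hp : p.natDegree ≤ n + 1)
    (r : R) : (taylor r p - p).coeff n = (n + 1) * r * p.coeff (n + 1) := by
  have hdeg : (hasseDeriv n p).natDegree < 2 :=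
    (natDegree_hasseDeriv_le p n).trans_lt (by omega)
  rw [coeff_sub, taylor_coeff, eval_eq_sum_range' hdeg, Finset.sum_range_succ,
    Finset.sum_range_one, hasseDeriv_coeff, hasseDeriv_coeff, zero_add, Nat.choose_self,
    add_comm 1 n, Nat.choose_succ_self_right]
  push_cast
  ring

end Taylor

noncomputable def ratSubfield : Subfield ℝ := (Rat.castHom ℝ).fieldRange

theorem mem_ratSubfield {x : ℝ} : x ∈ ratSubfield ↔ ∃ q : ℚ, x = q := by
  simp [ratSubfield, eq_comm]

section NonconstCoeffs

variable {R : Type*} [Field R]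

def Polynomial.NonconstCoeffsIn (K : Subfield R) (p : R[X]) : Prop :=
  ∀ i, i ≠ 0 → p.coeff i ∈ K

theorem Polynomial.NonconstCoeffsIn.of_natDegree_le_zero (K : Subfield R) {p : R[X]}
    (hdeg : p.natDegree ≤ 0) : p.NonconstCoeffsIn K := fun i hi => by
  rw [coeff_eq_zero_of_natDegree_lt (by omega)]
  exact zero_mem K

theorem Polynomial.NonconstCoeffsIn.of_natDegree_le_succ (K : Subfield R) {p : R[X]} {n : ℕ}
    (hdeg : p.natDegree ≤ n + 1) (hlow : ∀ i, i ≠ 0 → i ≤ n → p.coeff i ∈ K)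
    (htop : p.coeff (n + 1) ∈ K) : p.NonconstCoeffsIn K := by
  intro i hi
  rcases le_or_gt i n with hin | hni
  · exact hlow i hi hin
  · rcases (Nat.succ_le_of_lt hni).eq_or_lt with rfl | hi'
    · exact htop
    · rw [coeff_eq_zero_of_natDegree_lt (by omega)]
      exact zero_mem K

end NonconstCoeffs

theorem coeff_succ_mem_ratSubfield {n : ℕ}
    (ih : ∀ p ∈ finiteClusterPolys, p.natDegree ≤ n → p.NonconstCoeffsIn ratSubfield)
    {p : ℝ[X]} (hp : p ∈ finiteClusterPolys) (hdeg : p.natDegree ≤ n + 1) :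
    p.coeff (n + 1) ∈ ratSubfield := by
  rcases n with _ | n
  · rw [eq_X_add_C_of_natDegree_le_one hdeg] at hp
    exact mem_ratSubfield.2 (exists_rat_eq_of_linear_mem_finiteClusterPolys hp)
  · have hΔ : taylor 1 p - p ∈ finiteClusterPolys :=
      sub_mem (by simpa using taylor_natCast_mem_finiteClusterPolys hp 1) hp
    have h := ih _ hΔ (natDegree_taylor_sub_self_le hdeg 1) (n + 1) (by omega)
    rw [coeff_taylor_sub_self_of_natDegree_le hdeg, mul_one] at h
    convert div_mem h (natCast_mem ratSubfield (n + 2)) using 1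
    field_simp
    push_cast
    ring

theorem nonconstCoeffsIn_of_coeff_succ_mem {n : ℕ}
    (ih : ∀ p ∈ finiteClusterPolys, p.natDegree ≤ n → p.NonconstCoeffsIn ratSubfield)
    {p : ℝ[X]} (hp : p ∈ finiteClusterPolys) (hdeg : p.natDegree ≤ n + 1)
    (htop : p.coeff (n + 1) ∈ ratSubfield) : p.NonconstCoeffsIn ratSubfield := by
  obtain ⟨r, hr⟩ := mem_ratSubfield.1 htop
  -- with `q` the denominator of `r`, the top term of `p (q X)` is `r.num * q ^ n * X ^ (n + 1)`
  set q := r.den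
  set p' := p.comp (C (q : ℝ) * X) - C ((r.num * q ^ n : ℤ) : ℝ) * X ^ (n + 1)
  have hp' : p' ∈ finiteClusterPolys :=
    sub_mem (comp_natCast_mul_X_mem_finiteClusterPolys hp r.den_ne_zero)
      (intCast_mul_X_pow_mem_finiteClusterPolys _ _)
  have hcoeff (i : ℕ) :
      p'.coeff i = p.coeff i * q ^ i - if i = n + 1 then (r.num : ℝ) * q ^ n else 0 := by
    rw [coeff_sub, comp_C_mul_X_coeff, coeff_C_mul, coeff_X_pow]
    push_cast
    split_ifs <;> ring
  have hdeg' : p'.natDegree ≤ n := by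
    refine natDegree_le_iff_coeff_eq_zero.2 fun m hm => ?_
    rw [hcoeff]
    rcases (Nat.succ_le_of_lt hm).eq_or_lt with rfl | hm'
    · have hnum : (r : ℝ) * q = r.num := by exact_mod_cast Rat.mul_den_eq_num r
      rw [if_pos rfl, hr, pow_succ, ← mul_assoc, mul_comm _ ((q : ℝ) ^ n), mul_assoc, hnum]
      ring
    · rw [coeff_eq_zero_of_natDegree_lt (by omega), if_neg (by omega)]
      simp
  refine .of_natDegree_le_succ ratSubfield hdeg (fun i hi hin => ?_) htop
  have h := ih p' hp' hdeg' i hi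
  rw [hcoeff, if_neg (by omega), sub_zero] at h
  have hq : ((q : ℝ) ^ i) ≠ 0 := by positivity
  simpa [hq] using div_mem h (pow_mem (natCast_mem ratSubfield q) i)

theorem nonconstCoeffsIn_ratSubfield_of_mem_finiteClusterPolys {p : ℝ[X]}
    (hp : p ∈ finiteClusterPolys) : p.NonconstCoeffsIn ratSubfield := by
  suffices ∀ n, ∀ p ∈ finiteClusterPolys, p.natDegree ≤ n → p.NonconstCoeffsIn ratSubfield from
    this _ p hp le_rfl
  intro n
  induction n with
  | zero => exact fun p _ hdeg => .of_natDegree_le_zero ratSubfield hdeg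
  | succ n ih =>
    intro p hp hdeg
    exact nonconstCoeffsIn_of_coeff_succ_mem ih hp hdeg (coeff_succ_mem_ratSubfield ih hp hdeg)

section ShiftSum

variable {R : Type*} [Field R]

/-- `P(E)` for `P = ∑ a_s X^s` and the shift `E p = p(X + 1)`. -/
noncomputable def shiftSum (a : ℕ → ℤ) (d : ℕ) : R[X] →ₗ[R] R[X] :=
  ∑ s ∈ Finset.range (d + 1), (a s : R) • taylor (s : R)

variable (a : ℕ → ℤ) (d : ℕ)

theorem shiftSum_apply (p : R[X]) :
    shiftSum a d p = ∑ s ∈ Finset.range (d + 1), (a s : R) • taylor (s : R) p := by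
  simp [shiftSum]

theorem eval_shiftSum (p : R[X]) (r : R) :
    (shiftSum a d p).eval r = ∑ s ∈ Finset.range (d + 1), (a s : R) * p.eval (r + s) := by
  simp [shiftSum_apply, eval_finsetSum, taylor_eval]

theorem coeff_shiftSum_of_natDegree_le {p : R[X]} {m : ℕ} (hp : p.natDegree ≤ m) :
    (shiftSum a d p).coeff m = (∑ s ∈ Finset.range (d + 1), (a s : R)) * p.coeff m := by
  simp [shiftSum_apply, coeff_taylor_of_natDegree_le hp, Finset.sum_mul]

theorem nonconstCoeffsIn_shiftSum_X_pow (K : Subfield R) (m : ℕ) :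
    (shiftSum a d (X ^ m : R[X])).NonconstCoeffsIn K := fun i _ => by
  simp only [shiftSum_apply, finsetSum_coeff, coeff_smul, taylor_X_pow, coeff_X_add_C_pow,
    smul_eq_mul]
  exact sum_mem fun s _ =>
    mul_mem (intCast_mem K _) (mul_mem (pow_mem (natCast_mem K s) _) (natCast_mem K _))

variable {a d}

theorem Polynomial.NonconstCoeffsIn.of_shiftSum (K : Subfield R)
    (ha : ∑ s ∈ Finset.range (d + 1), (a s : R) ≠ 0) {p : R[X]}
    (hp : (shiftSum a d p).NonconstCoeffsIn K) : p.NonconstCoeffsIn K := by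
  suffices ∀ n, ∀ p : R[X], p.natDegree ≤ n → (shiftSum a d p).NonconstCoeffsIn K →
      p.NonconstCoeffsIn K from this _ p le_rfl hp
  intro n
  induction n with
  | zero => exact fun p hdeg _ => .of_natDegree_le_zero K hdeg
  | succ n ih =>
    intro p hdeg hp
    have hsum : ∑ s ∈ Finset.range (d + 1), (a s : R) ∈ K :=
      sum_mem fun s _ => intCast_mem K (a s)
    have htop : p.coeff (n + 1) ∈ K := by
      have h := hp (n + 1) (by omega)
      rw [coeff_shiftSum_of_natDegree_le a d hdeg] at h
      simpa [ha] using div_mem h hsum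
    set p' := p - C (p.coeff (n + 1)) * X ^ (n + 1)
    have hdeg' : p'.natDegree ≤ n := by
      refine natDegree_le_iff_coeff_eq_zero.2 fun m hm => ?_
      rcases (Nat.succ_le_of_lt hm).eq_or_lt with rfl | hm'
      · simp [p']
      · simp [p', coeff_eq_zero_of_natDegree_lt (hdeg.trans_lt hm'), coeff_X_pow, hm'.ne']
    have hp' : (shiftSum a d p').NonconstCoeffsIn K := fun i hi => by
      rw [map_sub, C_mul', map_smul, coeff_sub, coeff_smul, smul_eq_mul]
      exact sub_mem (hp i hi) (mul_mem htop (nonconstCoeffsIn_shiftSum_X_pow a d K _ i hi))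
    refine .of_natDegree_le_succ K hdeg (fun i hi hin => ?_) htop
    simpa [p', coeff_X_pow, (Nat.lt_succ_of_le hin).ne] using ih p' hdeg' hp' i hi

end ShiftSum


theorem shiftSum_mem_finiteClusterPolys {d : ℕ} {a : ℕ → ℤ} {x : ℕ → ℝ} {F : ℝ[X]}
    (hrec : ∀ k : ℕ, 1 ≤ k → ∑ s ∈ Finset.range (d + 1), (a s : ℝ) * x (k + s) = 0)
    (hy : (fun k : ℕ => ((x k + F.eval (k : ℝ) : ℝ) : AddCircle (1 : ℝ))) ∈
      finiteClusterSeqs (AddCircle (1 : ℝ))) :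
    shiftSum a d F ∈ finiteClusterPolys := by
  rw [mem_finiteClusterPolys_iff, ← comp_add_mem_finiteClusterSeqs_iff 1]
  -- the recurrence removes `x` from `∑ a_s y_{k+1+s}`
  have hsum : (fun k : ℕ => (((shiftSum a d F).eval ((k + 1 : ℕ) : ℝ) : ℝ) : AddCircle (1 : ℝ))) =
      ∑ s ∈ Finset.range (d + 1), a s • fun k =>
        ((x (k + (1 + s)) + F.eval ((k + (1 + s) : ℕ) : ℝ) : ℝ) : AddCircle (1 : ℝ)) := by
    ext k
    have hreal : (shiftSum a d F).eval ((k + 1 : ℕ) : ℝ) = ∑ s ∈ Finset.range (d + 1),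
        (a s : ℝ) * (x (k + (1 + s)) + F.eval ((k + (1 + s) : ℕ) : ℝ)) := by
      simp only [eval_shiftSum, mul_add, Finset.sum_add_distrib, ← add_assoc,
        hrec (k + 1) le_add_self, zero_add]
      push_cast
      ring_nf
    rw [hreal, Finset.sum_apply, AddCircle.coe_sum_intCast_mul]
    rfl
  rw [hsum]
  exact sum_mem fun s _ => zsmul_mem ((comp_add_mem_finiteClusterSeqs_iff _).2 hy) _

theorem stmt10_general (d f : ℕ) (a : ℕ → ℤ)
    (h1 : ∑ s ∈ Finset.range (d + 1), a s ≠ 0)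
    (θ : ℕ → ℝ) (x : ℕ → ℝ)
    (hrec : ∀ k : ℕ, 1 ≤ k → ∑ s ∈ Finset.range (d + 1), (a s : ℝ) * x (k + s) = 0)
    (hfin : {p : AddCircle (1 : ℝ) | MapClusterPt p Filter.atTop
      (fun k : ℕ => ((x k + ∑ i ∈ Finset.range (f + 1), θ i * (k : ℝ) ^ i : ℝ) :
        AddCircle (1 : ℝ)))}.Finite) :
    ∀ i : ℕ, 1 ≤ i → i ≤ f → ∃ q : ℚ, θ i = q := by
  set F : ℝ[X] := ∑ i ∈ Finset.range (f + 1), C (θ i) * X ^ i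
  have hFeval (r : ℝ) : F.eval r = ∑ i ∈ Finset.range (f + 1), θ i * r ^ i := by
    simp [F, eval_finsetSum]
  have hy : (fun k : ℕ => ((x k + F.eval (k : ℝ) : ℝ) : AddCircle (1 : ℝ))) ∈
      finiteClusterSeqs (AddCircle (1 : ℝ)) := by
    simpa only [mem_finiteClusterSeqs_iff, hFeval] using hfin
  have hF := (nonconstCoeffsIn_ratSubfield_of_mem_finiteClusterPolys
    (shiftSum_mem_finiteClusterPolys hrec hy)).of_shiftSum ratSubfield (by exact_mod_cast h1)
  intro i hi hif
  obtain ⟨q, hq⟩ := mem_ratSubfield.1 (hF i (by omega))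
  refine ⟨q, ?_⟩
  simpa [F, finsetSum_coeff, coeff_C_mul_X_pow, Nat.lt_succ_of_le hif] using hq

/-- If `P(1) ≠ 0`, `(x_k)` satisfies the recurrence of `P`, and the set of limit values of
`(x_k + F(k) mod 1)` is finite, then `F(x) - F(0) ∈ ℚ[x]`. -/
theorem stmt10 (d f : ℕ) (a : ℕ → ℤ) (ha : ∃ s, s ≤ d ∧ a s ≠ 0)
    (h1 : ∑ s ∈ Finset.range (d + 1), a s ≠ 0)
    (θ : ℕ → ℝ) (x : ℕ → ℝ)
    (hrec : ∀ k : ℕ, 1 ≤ k → ∑ s ∈ Finset.range (d + 1), (a s : ℝ) * x (k + s) = 0)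
    (hfin : {p : AddCircle (1 : ℝ) | MapClusterPt p Filter.atTop
      (fun k : ℕ => ((x k + ∑ i ∈ Finset.range (f + 1), θ i * (k : ℝ) ^ i : ℝ) :
        AddCircle (1 : ℝ)))}.Finite) :
    ∀ i : ℕ, 1 ≤ i → i ≤ f → ∃ q : ℚ, θ i = q :=
  stmt10_general d f a h1 θ x hrec hfin
end

section
/- Let ξ > 0 and let α = p/q be a rational number with integers p > |q| > 0 and p/q ∉ ℤ. Then the sequence (⌊ξ α^{k+1}⌋ − α ⌊ξ α^k⌋)_{k≥1} is not ultimately periodic. -/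
/-!
Write `x k = ⌊ξ α^k⌋`. If `x (k+1) - α x k` has period `m` from `N` on, then the integers
`t k = x (k+m) - x k` satisfy `t (k+1) = α t k` for `k ≥ N`. Clearing the denominator of
`α = a/b` (in lowest terms, `b ≥ 2`) gives `b t (k+1) = a t k`, so by coprimality every power of
`b` divides every `t k`, forcing `t k = 0`. Hence `x` is eventually periodic, contradicting
`x k → ∞`.
-/

open Filter

theorem Int.eq_zero_of_forall_pow_dvd {a b : ℤ} (ha : a.natAbs ≠ 1) (h : ∀ j : ℕ, a ^ j ∣ b) :
    b = 0 := by
  by_contra hb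
  obtain ⟨n, hn⟩ := Int.finiteMultiplicity_iff.2 ⟨ha, hb⟩
  exact hn (h _)

namespace Rat

variable {r : ℚ} {t : ℕ → ℤ} {N : ℕ}

theorem den_pow_dvd_of_succ_eq_mul (h : ∀ k ≥ N, (t (k + 1) : ℚ) = r * t k) (j : ℕ) :
    ∀ k ≥ N, (r.den : ℤ) ^ j ∣ t k := by
  induction j with
  | zero => simp
  | succ j ih =>
    intro k hk
    have hcleared : (r.den : ℤ) * t (k + 1) = r.num * t k := by
      have : ((r.den : ℤ) * t (k + 1) : ℚ) = (r.num * t k : ℤ) := by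
        push_cast
        rw [h k hk, ← mul_assoc, den_mul_eq_num]
      exact_mod_cast this
    have hdvd : (r.den : ℤ) ^ (j + 1) ∣ r.num * t k := by
      rw [← hcleared, pow_succ']
      exact mul_dvd_mul_left _ (ih (k + 1) (by omega))
    exact (r.isCoprime_num_den.symm.pow_left).dvd_of_dvd_mul_left hdvd

theorem eq_zero_of_succ_eq_mul (hr : r.den ≠ 1) (h : ∀ k ≥ N, (t (k + 1) : ℚ) = r * t k) :
    ∀ k ≥ N, t k = 0 := fun k hk =>
  Int.eq_zero_of_forall_pow_dvd (by simpa using hr) fun j => den_pow_dvd_of_succ_eq_mul h j k hk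

end Rat

theorem not_tendsto_atTop_of_eventually_periodic {α : Type*} [Preorder α] [NoTopOrder α]
    {f : ℕ → α} {N m : ℕ} (hm : 0 < m) (h : ∀ k ≥ N, f (k + m) = f k) :
    ¬ Tendsto f atTop atTop := by
  intro hf
  have hconst : ∀ j, f (N + j * m) = f N := by
    intro j
    induction j with
    | zero => simp
    | succ j ih => rw [Nat.succ_mul, ← add_assoc, h _ (by omega), ih]
  have hsub : Tendsto (fun j => N + j * m) atTop atTop :=
    tendsto_atTop_mono (fun j => le_add_left (Nat.le_mul_of_pos_right j hm)) tendsto_id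
  have := hf.comp hsub
  simp only [Function.comp_def, hconst] at this
  exact not_tendsto_const_atTop _ _ this

theorem stmt14_general (p q : ℤ) (hnint : ¬ q ∣ p)
    (hα : (1 : ℝ) < (p : ℝ) / (q : ℝ)) (ξ : ℝ) (hξ : 0 < ξ) :
    ¬ ∃ N m : ℕ, 1 ≤ m ∧ ∀ k : ℕ, N ≤ k →
      (⌊ξ * ((p : ℝ) / q) ^ (k + m + 1)⌋ : ℝ)
          - ((p : ℝ) / q) * ⌊ξ * ((p : ℝ) / q) ^ (k + m)⌋
        = (⌊ξ * ((p : ℝ) / q) ^ (k + 1)⌋ : ℝ)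
          - ((p : ℝ) / q) * ⌊ξ * ((p : ℝ) / q) ^ k⌋ := by
  rintro ⟨N, m, hm, hper⟩
  have hq : q ≠ 0 := by rintro rfl; norm_num at hα
  set r : ℚ := p / q
  have hr : r.den ≠ 1 := by rwa [Ne, Rat.den_div_intCast_eq_one_iff p q hq]
  have hrα : (r : ℝ) = p / q := by simp [r]
  set x : ℕ → ℤ := fun k => ⌊ξ * ((p : ℝ) / q) ^ k⌋
  have hrec : ∀ k ≥ N,
      ((x (k + 1 + m) - x (k + 1) : ℤ) : ℚ) = r * (x (k + m) - x k : ℤ) := by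
    intro k hk
    have hreal : ((x (k + 1 + m) - x (k + 1) : ℤ) : ℝ) = (r : ℝ) * (x (k + m) - x k : ℤ) := by
      rw [hrα, add_right_comm]
      push_cast
      linarith [hper k hk]
    exact_mod_cast hreal
  have hperiodic : ∀ k ≥ N, x (k + m) = x k := fun k hk =>
    sub_eq_zero.1 (Rat.eq_zero_of_succ_eq_mul (t := fun k => x (k + m) - x k) hr hrec k hk)
  exact not_tendsto_atTop_of_eventually_periodic hm hperiodic <|
    tendsto_floor_atTop.comp ((tendsto_pow_atTop_atTop_of_one_lt hα).const_mul_atTop hξ)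

/-- Dubickas–Novikas: for `ξ > 0` and `α = p/q > 1` rational but not an integer,
the sequence `(⌊ξ α^{k+1}⌋ - α ⌊ξ α^k⌋)` is not ultimately periodic. -/
theorem stmt14 (p q : ℤ) (hq : 0 < |q|) (hpq : |q| < p) (hnint : ¬ q ∣ p)
    (hα : (1 : ℝ) < (p : ℝ) / (q : ℝ)) (ξ : ℝ) (hξ : 0 < ξ) :
    ¬ ∃ N m : ℕ, 1 ≤ m ∧ ∀ k : ℕ, N ≤ k →
      (⌊ξ * ((p : ℝ) / q) ^ (k + m + 1)⌋ : ℝ)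
          - ((p : ℝ) / q) * ⌊ξ * ((p : ℝ) / q) ^ (k + m)⌋
        = (⌊ξ * ((p : ℝ) / q) ^ (k + 1)⌋ : ℝ)
          - ((p : ℝ) / q) * ⌊ξ * ((p : ℝ) / q) ^ k⌋ :=
  stmt14_general p q hnint hα ξ hξ
end

section
/- Let R(x) = Π_{j=1}^{n} (q_j x − p_j) where p_j, q_j are integers with p_j > |q_j| > 0. Then the reduced length ℓ(R) := inf_Q L(RQ), where Q runs over real polynomials with leading coefficient 1 or constant coefficient 1, satisfies ℓ(R) ≤ p_1 ⋯ p_n. -/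
/-!
Multiplying the linear factor `q x - p` by the truncated geometric series
`Σ_{i ≤ k} (q x / p)^i` (constant coefficient 1) telescopes it into the binomial
`p ((q x / p)^(k+1) - 1)`, whose length is `|p| (|q / p|^(k+1) + 1)`. Since the length is
submultiplicative, `ℓ(R)` is at most the product of these quantities for every `k`, and
they tend to `p_1 ⋯ p_n` because `|q_j| < p_j`.
-/

open Polynomial Finset Filter

/-- The length of a real polynomial: the sum of the absolute values of its coefficients. -/
noncomputable def polyLength (P : Polynomial ℝ) : ℝ :=
  ∑ i ∈ Finset.range (P.natDegree + 1), |P.coeff i|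

noncomputable def reducedLength (R : ℝ[X]) : ℝ :=
  sInf {l : ℝ | ∃ Q : ℝ[X], (Q.leadingCoeff = 1 ∨ Q.coeff 0 = 1) ∧ l = polyLength (R * Q)}

lemma polyLength_nonneg (P : ℝ[X]) : 0 ≤ polyLength P :=
  sum_nonneg fun _ _ => abs_nonneg _

lemma polyLength_eq_sum_of_support_subset {P : ℝ[X]} {s : Finset ℕ} (h : P.support ⊆ s) :
    polyLength P = ∑ i ∈ s, |P.coeff i| := by
  have hsupp : ∀ t : Finset ℕ, P.support ⊆ t →
      ∑ i ∈ P.support, |P.coeff i| = ∑ i ∈ t, |P.coeff i| := fun t ht =>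
    sum_subset ht fun i _ hi => by rw [notMem_support_iff.1 hi, abs_zero]
  rw [polyLength, ← hsupp _ supp_subset_range_natDegree_succ, hsupp s h]

lemma polyLength_eq_sum_support (P : ℝ[X]) : polyLength P = ∑ i ∈ P.support, |P.coeff i| :=
  polyLength_eq_sum_of_support_subset subset_rfl

lemma polyLength_add_le (P Q : ℝ[X]) : polyLength (P + Q) ≤ polyLength P + polyLength Q := by
  rw [polyLength_eq_sum_of_support_subset support_add,
    polyLength_eq_sum_of_support_subset (subset_union_left (s₂ := Q.support)),
    polyLength_eq_sum_of_support_subset (subset_union_right (s₁ := P.support)),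
    ← sum_add_distrib]
  exact sum_le_sum fun i _ => by rw [coeff_add]; exact abs_add_le _ _

lemma polyLength_neg (P : ℝ[X]) : polyLength (-P) = polyLength P := by
  simp [polyLength]

lemma polyLength_sub_le (P Q : ℝ[X]) : polyLength (P - Q) ≤ polyLength P + polyLength Q := by
  simpa only [sub_eq_add_neg, polyLength_neg] using polyLength_add_le P (-Q)

lemma polyLength_sum_le {ι : Type*} (s : Finset ι) (f : ι → ℝ[X]) :
    polyLength (∑ i ∈ s, f i) ≤ ∑ i ∈ s, polyLength (f i) := by
  induction s using Finset.cons_induction with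
  | empty => simp [polyLength]
  | cons a s ha ih =>
    rw [sum_cons, sum_cons]
    exact (polyLength_add_le _ _).trans (by gcongr)

lemma polyLength_monomial (k : ℕ) (c : ℝ) : polyLength (monomial k c) = |c| := by
  simp [polyLength_eq_sum_of_support_subset (support_monomial_subset k c)]

lemma polyLength_mul_le (P Q : ℝ[X]) : polyLength (P * Q) ≤ polyLength P * polyLength Q := by
  calc polyLength (P * Q)
      ≤ ∑ i ∈ P.support, ∑ j ∈ Q.support,
          polyLength (monomial (i + j) (P.coeff i * Q.coeff j)) := by
        rw [mul_eq_sum_sum]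
        refine (polyLength_sum_le _ _).trans (sum_le_sum fun i _ => ?_)
        rw [Polynomial.sum_def]
        exact polyLength_sum_le _ _
    _ = polyLength P * polyLength Q := by
        simp only [polyLength_monomial, abs_mul]
        rw [polyLength_eq_sum_support P, polyLength_eq_sum_support Q, sum_mul_sum]

lemma polyLength_prod_le {ι : Type*} (s : Finset ι) (f : ι → ℝ[X]) :
    polyLength (∏ i ∈ s, f i) ≤ ∏ i ∈ s, polyLength (f i) := by
  induction s using Finset.cons_induction with
  | empty => simp [polyLength]
  | cons a s ha ih =>
    rw [prod_cons, prod_cons]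
    exact (polyLength_mul_le _ _).trans (mul_le_mul_of_nonneg_left ih (polyLength_nonneg _))

lemma polyLength_C_mul_C_mul_X_pow_sub_one_le (b c : ℝ) (k : ℕ) :
    polyLength (C b * ((C c * X) ^ k - 1)) ≤ |b| * (|c| ^ k + 1) := by
  refine (polyLength_mul_le _ _).trans (mul_le_mul ?_ ?_ (polyLength_nonneg _) (abs_nonneg _))
  · rw [← monomial_zero_left, polyLength_monomial]
  · calc polyLength ((C c * X) ^ k - 1) = polyLength (monomial k (c ^ k) - monomial 0 1) := by
          rw [mul_pow, ← C_pow, C_mul_X_pow_eq_monomial, monomial_zero_left, C_1]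
      _ ≤ |c| ^ k + 1 := by
          simpa only [polyLength_monomial, abs_pow, abs_one] using
            polyLength_sub_le (monomial k (c ^ k)) (monomial 0 1)

lemma reducedLength_le_of_coeff_zero_eq_one (R : ℝ[X]) {Q : ℝ[X]} (hQ : Q.coeff 0 = 1) :
    reducedLength R ≤ polyLength (R * Q) :=
  csInf_le ⟨0, fun _ ⟨_, _, hl⟩ => hl ▸ polyLength_nonneg _⟩ ⟨Q, Or.inr hQ, rfl⟩

lemma coeff_zero_geom_sum_C_mul_X {K : Type*} [Field K] (c : K) (n : ℕ) :
    (∑ i ∈ range (n + 1), (C c * X) ^ i).coeff 0 = 1 := by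
  rw [coeff_zero_eq_eval_zero, eval_finsetSum, sum_range_succ']
  simp

lemma C_mul_X_sub_C_mul_geom_sum {K : Type*} [Field K] (a : K) {b : K} (hb : b ≠ 0) (n : ℕ) :
    (C a * X - C b) * ∑ i ∈ range n, (C (a / b) * X) ^ i = C b * ((C (a / b) * X) ^ n - 1) := by
  have hfactor : C a * X - C b = C b * (C (a / b) * X - 1) := by
    rw [mul_sub, ← mul_assoc, ← C_mul, mul_div_cancel₀ a hb, mul_one]
  rw [hfactor, mul_assoc, mul_geom_sum]

theorem reducedLength_prod_C_mul_X_sub_C_le {ι : Type*} (s : Finset ι) (a b : ι → ℝ)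
    (hab : ∀ j ∈ s, |a j| < |b j|) :
    reducedLength (∏ j ∈ s, (C (a j) * X - C (b j))) ≤ ∏ j ∈ s, |b j| := by
  have hb : ∀ j ∈ s, b j ≠ 0 := fun j hj => abs_pos.1 ((abs_nonneg _).trans_lt (hab j hj))
  have hbound : ∀ k : ℕ, reducedLength (∏ j ∈ s, (C (a j) * X - C (b j)))
      ≤ ∏ j ∈ s, |b j| * (|a j / b j| ^ (k + 1) + 1) := by
    intro k
    let Q : ι → ℝ[X] := fun j => ∑ i ∈ range (k + 1), (C (a j / b j) * X) ^ i
    have hQ : (∏ j ∈ s, Q j).coeff 0 = 1 := by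
      rw [coeff_zero_prod]
      exact prod_eq_one fun j _ => coeff_zero_geom_sum_C_mul_X _ k
    refine (reducedLength_le_of_coeff_zero_eq_one _ hQ).trans ?_
    rw [← prod_mul_distrib,
      prod_congr rfl fun j hj => C_mul_X_sub_C_mul_geom_sum (a j) (hb j hj) _]
    exact (polyLength_prod_le _ _).trans (prod_le_prod (fun _ _ => polyLength_nonneg _)
      fun _ _ => polyLength_C_mul_C_mul_X_pow_sub_one_le _ _ _)
  have hlim : Tendsto (fun k : ℕ => ∏ j ∈ s, |b j| * (|a j / b j| ^ (k + 1) + 1)) atTop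
      (nhds (∏ j ∈ s, |b j|)) := by
    refine tendsto_finsetProd _ fun j hj => ?_
    have hratio : |a j / b j| < 1 := by
      rw [abs_div]; exact (div_lt_one ((abs_nonneg _).trans_lt (hab j hj))).2 (hab j hj)
    simpa using ((((tendsto_pow_atTop_nhds_zero_of_lt_one (abs_nonneg _) hratio).comp
      (tendsto_add_atTop_nat 1)).add_const 1).const_mul |b j|)
  exact ge_of_tendsto' hlim hbound

/-- For `R(x) = Π (q_j x - p_j)` with `p_j > |q_j| > 0`, the reduced length
`ℓ(R) = inf_Q L(RQ)` satisfies `ℓ(R) ≤ p_1 ⋯ p_n`. -/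
theorem stmt15 (n : ℕ) (p q : Fin n → ℤ) (hpq : ∀ j, 0 < |q j| ∧ |q j| < p j) :
    sInf {l : ℝ | ∃ Q : Polynomial ℝ, (Q.leadingCoeff = 1 ∨ Q.coeff 0 = 1) ∧
        l = polyLength
          ((∏ j, (Polynomial.C (q j : ℝ) * Polynomial.X - Polynomial.C (p j : ℝ))) * Q)}
      ≤ ∏ j, (p j : ℝ) := by
  have hp : ∀ j, |(p j : ℝ)| = p j := fun j =>
    abs_of_pos (by exact_mod_cast (hpq j).1.trans (hpq j).2)
  have hqp : ∀ j ∈ univ, |(q j : ℝ)| < |(p j : ℝ)| := fun j _ => by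
    rw [hp]; exact_mod_cast (hpq j).2
  simpa only [reducedLength, hp] using reducedLength_prod_C_mul_X_sub_C_le univ _ _ hqp
end

section
/- Let α be a real algebraic number with |α| > 1 and let F(x) ∈ ℝ[x] be nonzero with F(x) ∉ ℚ(α)[x]. Then the set of limit values in ℝ/ℤ of the sequence (F(k) α^k mod 1)_{k≥1} is infinite. -/
/-!
Put `u k = F(k) α^k` and suppose that `u mod 1` has only finitely many limit points. Then
`u = a + e` with `e → 0` and `a mod 1` taking only finitely many values. If `P ∈ ℤ[X]` vanishes
at `α`, the recurrence operator `P^(deg F + 1)` annihilates `u`; applied to `a` it produces a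
sequence that tends to `0` and, as `P` has integer coefficients, takes only finitely many values
mod 1, so it vanishes eventually.

Over `K = ℚ(α)` write `P^(deg F + 1) = (X - α)^μ T` with `T(α) ≠ 0`. Since `|α| > 1`, a bounded
sequence annihilated by `(X - α)^μ` vanishes eventually; hence `T a = T u` eventually. Now let
`Φ : ℝ → ℝ` be `K`-linear with `Φ 1 = 0`. Then `Φ ∘ a` takes only finitely many values, so
`T (Φ ∘ u)` is bounded, while `Φ (u k) = F_Φ(k) α^k` where `F_Φ` has coefficients `Φ (F_i)`.
Coprimality of `T` and `X - α` forces `F_Φ = 0`. As this holds for every such `Φ`, all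
coefficients of `F` lie in `K`.
-/

open Polynomial Filter Topology Finset Asymptotics
open scoped fwdDiff

section SeqShift

variable (R M : Type*) [CommSemiring R] [AddCommMonoid M] [Module R M]

def seqShift : Module.End R (ℕ → M) := LinearMap.funLeft R M (· + 1)

variable {R M}

@[simp]
lemma seqShift_apply (c : ℕ → M) (k : ℕ) : seqShift R M c k = c (k + 1) := rfl

lemma seqShift_pow_apply (j : ℕ) (c : ℕ → M) (k : ℕ) : (seqShift R M ^ j) c k = c (k + j) := by
  induction j generalizing k with
  | zero => rfl
  | succ j ih => rw [pow_succ', Module.End.mul_apply, seqShift_apply, ih, add_assoc, add_comm 1]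

lemma aeval_seqShift_apply {P : R[X]} {n : ℕ} (hn : P.natDegree < n) (c : ℕ → M) (k : ℕ) :
    aeval (seqShift R M) P c k = ∑ j ∈ range n, P.coeff j • c (k + j) := by
  simp [aeval_eq_sum_range' hn, seqShift_pow_apply]

lemma aeval_seqShift_map_algebraMap {S : Type*} [CommSemiring S] [Algebra R S] [Module S M]
    [IsScalarTower R S M] (P : R[X]) (c : ℕ → M) :
    aeval (seqShift S M) (P.map (algebraMap R S)) c = aeval (seqShift R M) P c := by
  funext k
  rw [aeval_seqShift_apply (natDegree_map_le.trans_lt P.natDegree.lt_succ_self),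
    aeval_seqShift_apply P.natDegree.lt_succ_self]
  simp [coeff_map, algebraMap_smul]

lemma aeval_seqShift_comp {N : Type*} [AddCommMonoid N] [Module R N] (f : M →ₗ[R] N) (P : R[X])
    (c : ℕ → M) : aeval (seqShift R N) P (f ∘ c) = f ∘ aeval (seqShift R M) P c := by
  funext k
  simp [aeval_seqShift_apply P.natDegree.lt_succ_self]

lemma aeval_seqShift_eventuallyEq_zero (P : R[X]) {c : ℕ → M} (hc : c =ᶠ[atTop] 0) :
    aeval (seqShift R M) P c =ᶠ[atTop] 0 := by
  obtain ⟨N, hN⟩ := eventually_atTop.1 hc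
  filter_upwards [eventually_ge_atTop N] with k hk
  rw [aeval_seqShift_apply P.natDegree.lt_succ_self]
  exact sum_eq_zero fun j _ => by simp [hN (k + j) (by omega)]

lemma tendsto_aeval_seqShift [TopologicalSpace M] [ContinuousAdd M] [ContinuousConstSMul R M]
    (P : R[X]) {c : ℕ → M} (hc : Tendsto c atTop (𝓝 0)) :
    Tendsto (aeval (seqShift R M) P c) atTop (𝓝 0) := by
  simp_rw [funext (aeval_seqShift_apply P.natDegree.lt_succ_self c)]
  simpa using tendsto_finsetSum _ fun j _ =>
    (hc.comp (tendsto_add_atTop_nat j)).const_smul (P.coeff j)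

lemma finite_range_aeval_seqShift (P : R[X]) {c : ℕ → M} (hc : (Set.range c).Finite) :
    (Set.range (aeval (seqShift R M) P c)).Finite := by
  refine ((Set.Finite.pi fun _ : Fin (P.natDegree + 1) => hc).image
    fun t => ∑ j : Fin _, P.coeff j • t j).subset ?_
  rintro _ ⟨k, rfl⟩
  refine ⟨fun j => c (k + j), fun j _ => Set.mem_range_self _, ?_⟩
  simp [aeval_seqShift_apply P.natDegree.lt_succ_self,
    Fin.sum_univ_eq_sum_range (fun j => P.coeff j • c (k + j))]

end SeqShift

section ExpPoly

variable {R A : Type*} [CommRing R] [CommRing A] [Algebra R A]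

/-- Conjugating by `k ↦ b ^ k` turns `X - C β` into `b • Δ`. -/
lemma aeval_seqShift_X_sub_C_pow_mul_pow (β : R) (f : ℕ → A) (m : ℕ) :
    aeval (seqShift R A) ((X - C β) ^ m) (fun k => f k * algebraMap R A β ^ k) =
      fun k => ((Δ_[1])^[m] f) k * algebraMap R A β ^ (k + m) := by
  induction m with
  | zero => simp
  | succ m ih =>
    rw [pow_succ', map_mul, Module.End.mul_apply, ih]
    funext k
    simp only [map_sub, aeval_X, aeval_C, LinearMap.sub_apply, Pi.sub_apply, seqShift_apply,
      Function.iterate_succ_apply', fwdDiff, Module.algebraMap_end_apply]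
    simp only [Pi.smul_apply, Algebra.smul_def]
    ring

lemma fwdDiff_iter_sum_mul_natCast_pow_eq_zero (g : ℕ → A) (n : ℕ) :
    (Δ_[1])^[n] (fun k : ℕ => ∑ i ∈ range n, g i * (k : A) ^ i) = 0 := by
  funext k
  have := congrFun (fwdDiff_iter_sum_mul_pow_eq_zero (R := A) (n := n) g) k
  rw [fwdDiff_iter_eq_sum_shift] at this ⊢
  simpa using this

lemma aeval_seqShift_X_sub_C_pow_sum_mul_pow_eq_zero (β : R) (g : ℕ → A) (n : ℕ) :
    aeval (seqShift R A) ((X - C β) ^ n)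
      (fun k => (∑ i ∈ range n, g i * (k : A) ^ i) * algebraMap R A β ^ k) = 0 := by
  rw [aeval_seqShift_X_sub_C_pow_mul_pow β (fun k : ℕ => ∑ i ∈ range n, g i * (k : A) ^ i),
    fwdDiff_iter_sum_mul_natCast_pow_eq_zero]
  funext k
  simp

lemma aeval_seqShift_pow_eval_mul_pow_eq_zero {P : R[X]} {b : A} (hP : aeval b P = 0) (F : A[X]) :
    aeval (seqShift R A) (P ^ (F.natDegree + 1)) (fun k => F.eval (k : A) * b ^ k) = 0 := by
  have hdvd : X - C b ∣ P.map (algebraMap R A) := by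
    rwa [dvd_iff_isRoot, IsRoot.def, eval_map_algebraMap]
  obtain ⟨Q, hQ⟩ := pow_dvd_pow_of_dvd hdvd (F.natDegree + 1)
  rw [← aeval_seqShift_map_algebraMap (S := A), Polynomial.map_pow, hQ, mul_comm, map_mul,
    Module.End.mul_apply]
  simp_rw [eval_eq_sum_range]
  exact (congr_arg _ (aeval_seqShift_X_sub_C_pow_sum_mul_pow_eq_zero b _ _)).trans (map_zero _)

end ExpPoly

lemma eq_zero_of_eventually_sum_mul_natCast_pow_eq_zero {A : Type*} [CommRing A] [IsDomain A]
    [CharZero A] {g : ℕ → A} {n : ℕ} (h : ∀ᶠ k : ℕ in atTop, ∑ i ∈ range n, g i * (k : A) ^ i = 0)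
    {i : ℕ} (hi : i < n) : g i = 0 := by
  set P : A[X] := ∑ i ∈ range n, C (g i) * X ^ i
  have hP : P = 0 := by
    refine eq_zero_of_infinite_isRoot P (((Nat.frequently_atTop_iff_infinite.1 h.frequently).image
      Nat.cast_injective.injOn).mono ?_)
    rintro _ ⟨k, hk, rfl⟩
    simpa [P, eval_finsetSum] using hk
  simpa [P, finsetSum_coeff, coeff_C_mul_X_pow, hi] using congr_arg (coeff · i) hP

section Growth

variable {R A : Type*} [CommRing R] [NormedField A] [Algebra R A]

lemma eventuallyEq_zero_of_eventually_succ_eq_mul {b : A} (hb : 1 < ‖b‖) {d : ℕ → A}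
    (hd : d =O[atTop] fun _ => (1 : ℝ)) (h : ∀ᶠ k in atTop, d (k + 1) = b * d k) :
    d =ᶠ[atTop] 0 := by
  obtain ⟨N, hN⟩ := eventually_atTop.1 h
  have hgeom (j : ℕ) : d (j + N) = b ^ j * d N := by
    induction j with
    | zero => simp
    | succ j ih => rw [add_right_comm, hN _ (Nat.le_add_left N j), ih, pow_succ']; ring
  have hdN : d N = 0 := by
    by_contra hne
    refine not_isBoundedUnder_of_tendsto_atTop (f := fun j => ‖d (j + N)‖) ?_
      ((isBigO_one_iff ℝ).1 (hd.comp_tendsto (tendsto_add_atTop_nat N)))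
    simp_rw [hgeom, norm_mul, norm_pow]
    exact (tendsto_pow_atTop_atTop_of_one_lt hb).atTop_mul_const (norm_pos_iff.2 hne)
  filter_upwards [eventually_ge_atTop N] with k hk
  obtain ⟨j, rfl⟩ := Nat.exists_eq_add_of_le' hk
  simp [hgeom, hdN]

lemma eventuallyEq_zero_of_aeval_seqShift_X_sub_C_pow {β : R} (hβ : 1 < ‖algebraMap R A β‖)
    (μ : ℕ) {d : ℕ → A} (hd : d =O[atTop] fun _ => (1 : ℝ))
    (h : aeval (seqShift R A) ((X - C β) ^ μ) d =ᶠ[atTop] 0) : d =ᶠ[atTop] 0 := by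
  induction μ generalizing d with
  | zero => simpa using h
  | succ μ ih =>
    set d' := aeval (seqShift R A) (X - C β) d
    have hd'_apply (k : ℕ) : d' k = d (k + 1) - algebraMap R A β * d k := by
      simp [d', Algebra.smul_def]
    have hd' : d' =O[atTop] fun _ => (1 : ℝ) := by
      simp_rw [funext hd'_apply]
      exact (hd.comp_tendsto (tendsto_add_atTop_nat 1)).sub (hd.const_mul_left _)
    have hd'0 := ih hd' (by rwa [← Module.End.mul_apply, ← map_mul, ← pow_succ])
    refine eventuallyEq_zero_of_eventually_succ_eq_mul hβ hd ?_
    filter_upwards [hd'0] with k hk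
    rwa [Pi.zero_apply, hd'_apply, sub_eq_zero] at hk

end Growth

lemma eventuallyEq_zero_of_isBigO_aeval_seqShift {K A : Type*} [Field K] [NormedField A]
    [Algebra K A] {β : K} (hβ : 1 < ‖algebraMap K A β‖) {T : K[X]} (hT : ¬X - C β ∣ T) {m : ℕ}
    {c : ℕ → A} (hc : aeval (seqShift K A) ((X - C β) ^ m) c = 0)
    (hTc : aeval (seqShift K A) T c =O[atTop] fun _ => (1 : ℝ)) : c =ᶠ[atTop] 0 := by
  have hTc0 : aeval (seqShift K A) T c =ᶠ[atTop] 0 := by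
    refine eventuallyEq_zero_of_aeval_seqShift_X_sub_C_pow hβ m hTc (Eventually.of_forall ?_)
    rw [← Module.End.mul_apply, ← map_mul, mul_comm, map_mul, Module.End.mul_apply, hc, map_zero]
    exact fun _ => rfl
  obtain ⟨p, q, hpq⟩ : IsCoprime ((X - C β) ^ m) T :=
    ((irreducible_X_sub_C β).coprime_iff_not_dvd.2 hT).pow_left
  have hc_eq := congr_arg (fun P => aeval (seqShift K A) P c) hpq
  simp only [map_add, map_mul, map_one, LinearMap.add_apply, Module.End.mul_apply,
    Module.End.one_apply, hc, map_zero, zero_add] at hc_eq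
  exact hc_eq ▸ aeval_seqShift_eventuallyEq_zero q hTc0

lemma Filter.Tendsto.eventually_eq_of_finite_range {ι X : Type*} [TopologicalSpace X] [T1Space X]
    {l : Filter ι} {f : ι → X} {x : X} (hf : Tendsto f l (𝓝 x)) (hfin : (Set.range f).Finite) :
    ∀ᶠ i in l, f i = x := by
  have : (Set.range f \ {x})ᶜ ∈ 𝓝 x := hfin.sdiff.isClosed.compl_mem_nhds (by simp)
  filter_upwards [hf this] with i hi
  by_contra h
  exact hi ⟨Set.mem_range_self i, h⟩

lemma eventuallyEq_zero_of_tendsto_of_finite_range_coe {v : ℕ → ℝ} (hv : Tendsto v atTop (𝓝 0))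
    (hfin : (Set.range fun k => (v k : UnitAddCircle)).Finite) : v =ᶠ[atTop] 0 := by
  have hcoe : ∀ᶠ k in atTop, (v k : UnitAddCircle) = 0 :=
    ((AddCircle.continuous_mk' 1).tendsto' 0 0 rfl |>.comp hv).eventually_eq_of_finite_range hfin
  filter_upwards [hcoe, hv (Metric.ball_mem_nhds 0 one_pos)] with k hk hlt
  obtain ⟨n, hn⟩ := (AddCircle.coe_eq_zero_iff 1).1 hk
  have : |(n : ℝ)| < 1 := by simpa [← hn] using hlt
  rw [← hn, Pi.zero_apply, zsmul_one, Int.cast_eq_zero]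
  exact_mod_cast Int.abs_lt_one_iff.1 (by exact_mod_cast this)

lemma finite_range_comp_of_finite_range_coe {G : Type*} [AddCommGroup G] {a : ℕ → ℝ}
    (ha : (Set.range fun k => (a k : UnitAddCircle)).Finite) (Φ : ℝ →+ G) (hΦ : Φ 1 = 0) :
    (Set.range (Φ ∘ a)).Finite := by
  let Ψ : UnitAddCircle →+ G := QuotientAddGroup.lift _ Φ <| by
    rintro _ ⟨n, rfl⟩
    exact (map_zsmul Φ n 1).trans (by rw [hΦ, smul_zero])
  refine (ha.image Ψ).subset ?_
  rintro _ ⟨k, rfl⟩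
  exact ⟨_, ⟨k, rfl⟩, rfl⟩

lemma exists_tendsto_dist_of_finite_mapClusterPt {X : Type*} [MetricSpace X] [CompactSpace X]
    {f : ℕ → X} (h : {x | MapClusterPt x atTop f}.Finite) :
    ∃ σ : ℕ → X, (∀ k, MapClusterPt (σ k) atTop f) ∧
      Tendsto (fun k => dist (f k) (σ k)) atTop (𝓝 0) := by
  have hf : Tendsto f atTop (𝓝ˢ {x | MapClusterPt x atTop f}) :=
    isCompact_univ.tendsto_nhdsSet_of_mapClusterPt (by simp) fun x _ hx => hx
  obtain ⟨x₀, -, hx₀⟩ := isCompact_univ.exists_mapClusterPt (f := atTop) (u := f) (by simp)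
  choose σ hσ hσmin using fun k => Set.exists_min_image _ (dist (f k)) h ⟨x₀, hx₀⟩
  refine ⟨σ, hσ, Metric.tendsto_nhds.2 fun ε hε => ?_⟩
  filter_upwards [hf (Metric.thickening_mem_nhdsSet _ hε)] with k hk
  obtain ⟨x, hx, hdist⟩ := Metric.mem_thickening_iff.1 hk
  rw [Real.dist_0_eq_abs, abs_dist]
  exact (hσmin k x hx).trans_lt hdist

lemma exists_tendsto_sub_of_finite_mapClusterPt {u : ℕ → ℝ}
    (h : {x : UnitAddCircle | MapClusterPt x atTop fun k => (u k : UnitAddCircle)}.Finite) :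
    ∃ a : ℕ → ℝ, (Set.range fun k => (a k : UnitAddCircle)).Finite ∧
      Tendsto (u - a) atTop (𝓝 0) := by
  obtain ⟨σ, hσ, hdist⟩ := exists_tendsto_dist_of_finite_mapClusterPt h
  choose r hr using fun x : UnitAddCircle => QuotientAddGroup.mk_surjective x
  let a k := r (σ k) + round (u k - r (σ k))
  have hσa (k : ℕ) : (a k : UnitAddCircle) = σ k := by
    rw [AddCircle.coe_add, hr, (AddCircle.coe_eq_zero_iff 1).2 ⟨_, zsmul_one _⟩, add_zero]
  refine ⟨a, h.subset ?_, ?_⟩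
  · rintro _ ⟨k, rfl⟩
    simpa only [Set.mem_ofPred_eq, hσa] using hσ k
  · rw [tendsto_zero_iff_norm_tendsto_zero]
    refine hdist.congr fun k => ?_
    rw [dist_eq_norm, ← hr (σ k), ← AddCircle.coe_sub, UnitAddCircle.norm_eq, Real.norm_eq_abs,
      Pi.sub_apply, sub_add_eq_sub_sub]

lemma aeval_seqShift_eventuallyEq_zero_of_tendsto_sub (P : ℤ[X]) {u a : ℕ → ℝ}
    (hu : aeval (seqShift ℤ ℝ) P u = 0) (ha : (Set.range fun k => (a k : UnitAddCircle)).Finite)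
    (hua : Tendsto (u - a) atTop (𝓝 0)) : aeval (seqShift ℤ ℝ) P a =ᶠ[atTop] 0 := by
  refine eventuallyEq_zero_of_tendsto_of_finite_range_coe ?_ ?_
  · simpa [hu] using (tendsto_aeval_seqShift P hua).neg
  · convert finite_range_aeval_seqShift P ha using 1
    exact congr_arg Set.range
      (aeval_seqShift_comp (QuotientAddGroup.mk' (AddSubgroup.zmultiples (1 : ℝ))).toIntLinearMap
        P a).symm

lemma IntermediateField.mem_of_forall_linearMap_eq_zero {F L : Type*} [Field F] [Field L]
    [Algebra F L] (K : IntermediateField F L) {x : L}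
    (h : ∀ Φ : L →ₗ[K] L, Φ 1 = 0 → Φ x = 0) : x ∈ K := by
  by_contra hx
  have hx' : x ∉ K ∙ (1 : L) := by
    rintro hmem
    obtain ⟨κ, rfl⟩ := Submodule.mem_span_singleton.1 hmem
    simp [Algebra.smul_def] at hx
  obtain ⟨f, hfx, hf1⟩ := Submodule.exists_dual_map_eq_bot_of_notMem hx' inferInstance
  refine hfx (FaithfulSMul.algebraMap_injective K L ?_)
  rw [map_zero]
  refine h ((Algebra.linearMap K L).comp f) ?_
  have := hf1 ▸ Submodule.mem_map_of_mem (f := f) (Submodule.mem_span_singleton_self (1 : L))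
  simpa using this

lemma linearMap_eval_mul_pow {K A : Type*} [CommRing K] [CommRing A] [Algebra K A]
    (Φ : A →ₗ[K] A) (F : A[X]) (β : K) (k : ℕ) :
    Φ (F.eval (k : A) * algebraMap K A β ^ k) =
      (∑ i ∈ range (F.natDegree + 1), Φ (F.coeff i) * (k : A) ^ i) * algebraMap K A β ^ k := by
  rw [eval_eq_sum_range, sum_mul, map_sum, sum_mul]
  refine sum_congr rfl fun i _ => ?_
  have : F.coeff i * (k : A) ^ i * algebraMap K A β ^ k = ((k : K) ^ i * β ^ k) • F.coeff i := by
    simp [Algebra.smul_def]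
    ring
  rw [this, map_smul, Algebra.smul_def]
  simp
  ring

lemma IntermediateField.coeff_mem_of_aeval_seqShift_sub_eventuallyEq_zero {F₀ : Type*}
    [Field F₀] [Algebra F₀ ℝ] {K : IntermediateField F₀ ℝ} {β : K} (hβ : 1 < |(β : ℝ)|)
    {T : K[X]} (hT : ¬X - C β ∣ T) (F : ℝ[X]) {a : ℕ → ℝ}
    (ha : (Set.range fun k => (a k : UnitAddCircle)).Finite)
    (hTa : aeval (seqShift K ℝ) T ((fun k : ℕ => F.eval (k : ℝ) * (β : ℝ) ^ k) - a)
      =ᶠ[atTop] 0)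
    (i : ℕ) : F.coeff i ∈ K := by
  refine K.mem_of_forall_linearMap_eq_zero fun Φ hΦ => ?_
  rcases lt_or_ge i (F.natDegree + 1) with hi | hi
  swap
  · rw [coeff_eq_zero_of_natDegree_lt (by omega), map_zero]
  set c : ℕ → ℝ := fun k =>
    (∑ i ∈ range (F.natDegree + 1), Φ (F.coeff i) * (k : ℝ) ^ i) * algebraMap K ℝ β ^ k
  have hc : c = Φ ∘ fun k : ℕ => F.eval (k : ℝ) * (β : ℝ) ^ k :=
    funext fun k => (linearMap_eval_mul_pow Φ F β k).symm
  obtain ⟨M, hM⟩ := ((finite_range_aeval_seqShift T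
    (finite_range_comp_of_finite_range_coe ha Φ.toAddMonoidHom hΦ)).image norm).bddAbove
  have hTc : aeval (seqShift K ℝ) T c =O[atTop] fun _ => (1 : ℝ) := by
    refine ((isBigO_one_iff ℝ).2 (isBoundedUnder_of ⟨M, fun k => hM ⟨_, ⟨k, rfl⟩, rfl⟩⟩)).congr'
      ?_ EventuallyEq.rfl
    rw [hc, aeval_seqShift_comp]
    filter_upwards [hTa] with k hk
    rw [map_sub, Pi.sub_apply, Pi.zero_apply, sub_eq_zero] at hk
    exact (congrFun (aeval_seqShift_comp Φ T a) k).trans (congr_arg Φ hk.symm)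
  have hc0 := eventuallyEq_zero_of_isBigO_aeval_seqShift (by simpa using hβ) hT
    (aeval_seqShift_X_sub_C_pow_sum_mul_pow_eq_zero β _ _) hTc
  have hβ0 : β ≠ 0 := by
    rintro rfl
    norm_num at hβ
  refine eq_zero_of_eventually_sum_mul_natCast_pow_eq_zero (g := fun i => Φ (F.coeff i))
    (hc0.mono fun k hk => ?_) hi
  simpa [c, hβ0] using hk

theorem stmt17_general (α : ℝ) (hαalg : IsAlgebraic ℚ α) (hα : 1 < |α|)
    (F : Polynomial ℝ)
    (hFnot : ∃ i : ℕ, F.coeff i ∉ IntermediateField.adjoin ℚ ({α} : Set ℝ)) :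
    {pt : AddCircle (1 : ℝ) | MapClusterPt pt Filter.atTop
      (fun k : ℕ => ((F.eval (k : ℝ) * α ^ k : ℝ) : AddCircle (1 : ℝ)))}.Infinite := by
  intro hfin
  obtain ⟨a, ha, hua⟩ := exists_tendsto_sub_of_finite_mapClusterPt hfin
  obtain ⟨P, hP0, hPα⟩ := (IsFractionRing.isAlgebraic_iff ℤ ℚ ℝ).2 hαalg
  have hu := aeval_seqShift_pow_eval_mul_pow_eq_zero hPα F
  have hPa := aeval_seqShift_eventuallyEq_zero_of_tendsto_sub _ hu ha hua
  set K := IntermediateField.adjoin ℚ ({α} : Set ℝ)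
  let β : K := ⟨α, IntermediateField.mem_adjoin_simple_self ℚ α⟩
  obtain ⟨T, hPT, hT⟩ := exists_eq_pow_rootMultiplicity_mul_and_not_dvd
    ((P ^ (F.natDegree + 1)).map (algebraMap ℤ K))
    ((Polynomial.map_ne_zero_iff (algebraMap ℤ K).injective_int).2 (pow_ne_zero _ hP0)) β
  have hTua := eventuallyEq_zero_of_aeval_seqShift_X_sub_C_pow (β := β) (by simpa using hα) _
    ((tendsto_aeval_seqShift T hua).isBigO_one ℝ) <| by
      rw [← Module.End.mul_apply, ← map_mul, ← hPT, aeval_seqShift_map_algebraMap, map_sub, hu,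
        zero_sub]
      simpa using hPa.neg
  obtain ⟨i, hi⟩ := hFnot
  exact hi (IntermediateField.coeff_mem_of_aeval_seqShift_sub_eventuallyEq_zero hα hT F ha hTua i)

/-- If `α` is a real algebraic number with `|α| > 1` and `F ∈ ℝ[x]` is nonzero with
some coefficient outside `ℚ(α)`, then the set of limit values of `(F(k) α^k mod 1)` is
infinite. -/
theorem stmt17 (α : ℝ) (hαalg : IsAlgebraic ℚ α) (hα : 1 < |α|)
    (F : Polynomial ℝ) (hF : F ≠ 0)
    (hFnot : ∃ i : ℕ, F.coeff i ∉ IntermediateField.adjoin ℚ ({α} : Set ℝ)) :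
    {pt : AddCircle (1 : ℝ) | MapClusterPt pt Filter.atTop
      (fun k : ℕ => ((F.eval (k : ℝ) * α ^ k : ℝ) : AddCircle (1 : ℝ)))}.Infinite :=
  stmt17_general α hαalg hα F hFnot
end
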